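/- arXiv:2601.06929 — 2 statements merged into one kernel-verified Lean document; each statement's English description precedes it below -/
import Mathlib

section
/- Let Ĥ be a group with a central subgroup Z and abelian quotient V = Ĥ/Z, and suppose Ĥ = W₁·W₂·Z where W₁, W₂ are abelian subgroups with W₁ ∩ Z = W₂ ∩ Z = {1} and every element of Ĥ has a unique expression w₁w₂z with wᵢ ∈ Wᵢ, z ∈ Z. Assume Z is uniquely 2-divisible and [Ĥ,Ĥ] ⊆ Z. Let κ: V × V → Z be the pairing induced by the commutator. Then the map j: Ĥ → V × Z, j(w₁w₂z) = (π(w₁w₂), z + ½κ(w₁,w₂)) (π: Ĥ → V the projection, V and Z written additively), is a group isomorphism onto the Heisenberg group V^♯ associated to (V, κ). -/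
/-- The commutator `[x,y] = x y x⁻¹ y⁻¹`. -/
def grpComm {H : Type*} [Group H] (x y : H) : H := x * y * x⁻¹ * y⁻¹

/-! Since commutators are central, `κ` is bimultiplicative and vanishes on `W₁ × W₁`, `W₂ × W₂`
and on `Z`. Hence `(w₁ w₂ z)(w₁' w₂' z') = (w₁ w₁')(w₂ w₂')(z z' κ(w₂, w₁'))` and
`κ(w₁ w₂ z, w₁' w₂' z') = κ(w₁, w₂') κ(w₂, w₁')`. Unique 2-divisibility makes halving a
homomorphism of `Z`, so the cocycle identity for `σ(w₁ w₂ z) = z · ½κ(w₁, w₂)` comes down to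
`κ(w₂, w₁') = (½κ(w₂, w₁'))²`. The cocycle identity and `σ|_Z = id` make `σ` equivariant under
right multiplication by `Z`, which is exactly what makes `g ↦ (g Z, σ g)` bijective. -/

open Subgroup
open scoped IsMulCommutative commutatorElement

theorem Subgroup.isMulCommutative_of_le_center {G : Type*} [Group G] {Z : Subgroup G}
    (hZ : Z ≤ center G) : IsMulCommutative Z :=
  le_centralizer_iff_isMulCommutative.mp (hZ.trans (center_le_centralizer _))

section Commutator

variable {G : Type*} [Group G]

theorem grpComm_eq_one_of_mul_comm {a b : G} (h : a * b = b * a) : grpComm a b = 1 :=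
  commutatorElement_eq_one_iff_mul_comm.mpr h

theorem grpComm_swap (a b : G) : grpComm b a = (grpComm a b)⁻¹ :=
  (commutatorElement_inv a b).symm

variable (hG : ∀ x y : G, grpComm x y ∈ center G)
include hG

theorem grpComm_mul_left (a b c : G) : grpComm (a * b) c = grpComm a c * grpComm b c := by
  have hac : ∀ g, g * ⁅a, c⁆ = ⁅a, c⁆ * g := mem_center_iff.mp (hG a c)
  have hbc : ∀ g, g * ⁅b, c⁆ = ⁅b, c⁆ * g := mem_center_iff.mp (hG b c)
  change ⁅a * b, c⁆ = ⁅a, c⁆ * ⁅b, c⁆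
  rw [commutatorElement_mul_left_eq_conj_mul, hbc a, mul_inv_cancel_right, hac]

theorem grpComm_mul_right (a b c : G) : grpComm a (b * c) = grpComm a b * grpComm a c := by
  have hac : ∀ g, g * ⁅a, c⁆ = ⁅a, c⁆ * g := mem_center_iff.mp (hG a c)
  change ⁅a, b * c⁆ = ⁅a, b⁆ * ⁅a, c⁆
  rw [commutatorElement_mul_right_eq_mul_conj, mul_assoc _ b, hac b, ← mul_assoc,
    mul_inv_cancel_right]

/-- In coordinates `a b z`, moving `a'` past `b` costs the central factor `[b, a']`. -/
theorem factor_mul_factor {a b z a' b' z' : G} (hz : z ∈ center G) :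
    a * b * z * (a' * b' * z') = a * a' * (b * b') * (z * z' * grpComm b a') := by
  set c := grpComm b a'
  have hc : ∀ g, g * c = c * g := mem_center_iff.mp (hG b a')
  have hba : b * a' = a' * b * c := by rw [hc (a' * b)]; simp only [c, grpComm]; group
  calc a * b * z * (a' * b' * z') = a * (b * a') * b' * (z * z') := by
        rw [mul_assoc (a * b) z, ← mul_assoc z, ← mem_center_iff.mp hz (a' * b')]; group
    _ = a * a' * b * (c * b') * (z * z') := by rw [hba]; group
    _ = a * a' * b * b' * (c * (z * z')) := by rw [← hc b']; group
    _ = a * a' * (b * b') * (z * z' * c) := by rw [← hc (z * z')]; group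

end Commutator

section CommutatorPairing

variable {H : Type*} [Group H] {Z : Subgroup H} (hcomm : ∀ x y : H, grpComm x y ∈ Z)

/-- The commutator pairing `κ`, with values in `Z`. -/
def commPairing (x y : H) : Z := ⟨grpComm x y, hcomm x y⟩

theorem commPairing_eq_one_of_mul_comm {a b : H} (h : a * b = b * a) :
    commPairing hcomm a b = 1 :=
  Subtype.ext (grpComm_eq_one_of_mul_comm h)

theorem commPairing_swap (a b : H) : commPairing hcomm b a = (commPairing hcomm a b)⁻¹ :=
  Subtype.ext (grpComm_swap a b)

variable (hZ : Z ≤ center H)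
include hZ

theorem commPairing_mul_left (a b c : H) :
    commPairing hcomm (a * b) c = commPairing hcomm a c * commPairing hcomm b c :=
  Subtype.ext (grpComm_mul_left (fun x y => hZ (hcomm x y)) a b c)

theorem commPairing_mul_right (a b c : H) :
    commPairing hcomm a (b * c) = commPairing hcomm a b * commPairing hcomm a c :=
  Subtype.ext (grpComm_mul_right (fun x y => hZ (hcomm x y)) a b c)

theorem commPairing_coe_right (x : H) (z : Z) : commPairing hcomm x z = 1 :=
  commPairing_eq_one_of_mul_comm hcomm (mem_center_iff.mp (hZ z.2) x)

theorem commPairing_coe_left (z : Z) (x : H) : commPairing hcomm z x = 1 :=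
  commPairing_eq_one_of_mul_comm hcomm (mem_center_iff.mp (hZ z.2) x).symm

end CommutatorPairing

section UniqueHalving

variable {A : Type*} [CommGroup A] {half : A → A} (hhalf : ∀ a, half a * half a = a)
  (hinj2 : ∀ a b : A, a * a = b * b → a = b)
include hhalf hinj2

theorem half_mul (a b : A) : half (a * b) = half a * half b :=
  hinj2 _ _ <| by rw [hhalf, mul_mul_mul_comm, hhalf, hhalf]

theorem half_inv (a : A) : half a⁻¹ = (half a)⁻¹ :=
  map_inv (MonoidHom.mk' half (half_mul hhalf hinj2)) a

theorem half_one : half 1 = 1 :=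
  map_one (MonoidHom.mk' half (half_mul hhalf hinj2))

end UniqueHalving

theorem bijective_mk_prod_of_map_mul_right {G : Type*} [Group G] {Z : Subgroup G} (s : G → Z)
    (hs : ∀ (g : G) (z : Z), s (g * z) = s g * z) :
    Function.Bijective (fun g : G => ((QuotientGroup.mk g : G ⧸ Z), s g)) := by
  constructor
  · intro g g' hgg'
    obtain ⟨hmk, hsg⟩ := Prod.mk.inj hgg'
    set z : Z := ⟨g⁻¹ * g', QuotientGroup.eq.mp hmk⟩
    have hg' : g' = g * z := by simp [z]
    have hz : z = 1 := by
      rw [hg', hs] at hsg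
      exact (mul_eq_left.mp hsg.symm)
    simp [hg', hz]
  · rintro ⟨v, t⟩
    obtain ⟨g, rfl⟩ := QuotientGroup.mk_surjective v
    refine ⟨g * ((s g)⁻¹ * t : Z), Prod.ext ?_ ?_⟩
    · exact QuotientGroup.eq.mpr (by simpa using Z.mul_mem (Z.inv_mem t.2) (s g).2)
    · exact (hs _ _).trans (mul_inv_cancel_left _ _)

section Factorization

variable {H : Type*} [Group H] (W₁ W₂ Z : Subgroup H)

def factorMul (w : W₁ × W₂ × Z) : H := w.1 * w.2.1 * w.2.2

variable {W₁ W₂ Z} (hcomm : ∀ x y : H, grpComm x y ∈ Z) (half : Z → Z)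

/-- The `Z`-coordinate `z + ½κ(w₁, w₂)` of `j(w₁ w₂ z)`. -/
def heisenbergCoord (w : W₁ × W₂ × Z) : Z := w.2.2 * half (commPairing hcomm w.1 w.2.1)

variable (hZ : Z ≤ center H)
include hZ

theorem factorMul_mul (w w' : W₁ × W₂ × Z) :
    factorMul W₁ W₂ Z w * factorMul W₁ W₂ Z w' =
      factorMul W₁ W₂ Z (w.1 * w'.1, w.2.1 * w'.2.1,
        w.2.2 * w'.2.2 * commPairing hcomm w.2.1 w'.1) :=
  factor_mul_factor (fun x y => hZ (hcomm x y)) (hZ w.2.2.2)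

variable (hW₁comm : ∀ a ∈ W₁, ∀ b ∈ W₁, a * b = b * a)
  (hW₂comm : ∀ a ∈ W₂, ∀ b ∈ W₂, a * b = b * a)
include hW₁comm hW₂comm

theorem commPairing_factorMul (w w' : W₁ × W₂ × Z) :
    commPairing hcomm (factorMul W₁ W₂ Z w) (factorMul W₁ W₂ Z w') =
      commPairing hcomm w.1 w'.2.1 * commPairing hcomm w.2.1 w'.1 := by
  have hW₁ := commPairing_eq_one_of_mul_comm hcomm (hW₁comm _ w.1.2 _ w'.1.2)
  have hW₂ := commPairing_eq_one_of_mul_comm hcomm (hW₂comm _ w.2.1.2 _ w'.2.1.2)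
  simp only [factorMul, commPairing_mul_left hcomm hZ, commPairing_mul_right hcomm hZ,
    commPairing_coe_left hcomm hZ, commPairing_coe_right hcomm hZ, hW₁, hW₂, mul_one, one_mul]

/-- The Heisenberg cocycle identity `σ(g g') = σ(g) σ(g') ½κ(g, g')` in coordinates. -/
theorem heisenbergCoord_mul (hhalf : ∀ z, half z * half z = z)
    (hinj2 : ∀ z w : Z, z * z = w * w → z = w) (w w' : W₁ × W₂ × Z) :
    heisenbergCoord hcomm half (w.1 * w'.1, w.2.1 * w'.2.1,
        w.2.2 * w'.2.2 * commPairing hcomm w.2.1 w'.1) =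
      heisenbergCoord hcomm half w * heisenbergCoord hcomm half w' *
        half (commPairing hcomm (factorMul W₁ W₂ Z w) (factorMul W₁ W₂ Z w')) := by
  have := isMulCommutative_of_le_center hZ
  obtain ⟨⟨a, ha⟩, ⟨b, hb⟩, z⟩ := w
  obtain ⟨⟨a', ha'⟩, ⟨b', hb'⟩, z'⟩ := w'
  have hba : commPairing hcomm a' b = (commPairing hcomm b a')⁻¹ := commPairing_swap hcomm b a'
  simp only [heisenbergCoord, commPairing_factorMul hcomm hZ hW₁comm hW₂comm, coe_mul,
    commPairing_mul_left hcomm hZ, commPairing_mul_right hcomm hZ, hba,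
    half_mul hhalf hinj2, half_inv hhalf hinj2]
  -- the factor `κ(b, a')` from reordering is absorbed as `(½κ(b, a'))²`
  have hsq := hhalf (commPairing hcomm b a')
  generalize commPairing hcomm b a' = c at hsq ⊢
  generalize half c = h at hsq ⊢
  subst hsq
  simp [mul_assoc, mul_comm, mul_left_comm]

end Factorization

theorem heisenberg_splitting_general
    (H : Type*) [Group H] (Z W₁ W₂ : Subgroup H)
    (hZ : Z ≤ Subgroup.center H)
    (hW₁comm : ∀ a ∈ W₁, ∀ b ∈ W₁, a * b = b * a)
    (hW₂comm : ∀ a ∈ W₂, ∀ b ∈ W₂, a * b = b * a)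
    (hfact : ∀ g : H, ∃! w : W₁ × W₂ × Z, g = (w.1 : H) * (w.2.1 : H) * (w.2.2 : H))
    (hcomm : ∀ x y : H, grpComm x y ∈ Z)
    (half : Z → Z) (hhalf : ∀ z : Z, half z * half z = z)
    (hinj2 : ∀ z w : Z, z * z = w * w → z = w) :
    ∃ σ : H → Z,
      (∀ (w₁ : W₁) (w₂ : W₂) (z : Z),
        σ ((w₁ : H) * (w₂ : H) * (z : H)) =
          z * half ⟨grpComm (w₁ : H) (w₂ : H), hcomm _ _⟩) ∧
      Function.Bijective (fun g : H => ((QuotientGroup.mk g : H ⧸ Z), σ g)) ∧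
      (∀ g g' : H, σ (g * g') = σ g * σ g' * half ⟨grpComm g g', hcomm g g'⟩) := by
  have := isMulCommutative_of_le_center hZ
  have hbij : Function.Bijective (factorMul W₁ W₂ Z) :=
    (Function.bijective_iff_existsUnique _).mpr fun g => by
      simpa only [factorMul, eq_comm] using hfact g
  let σ : H → Z := heisenbergCoord hcomm half ∘ (Equiv.ofBijective _ hbij).symm
  have hσ : ∀ w, σ (factorMul W₁ W₂ Z w) = heisenbergCoord hcomm half w := fun w =>
    congrArg (heisenbergCoord hcomm half) ((Equiv.ofBijective _ hbij).symm_apply_apply w)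
  have hcocycle : ∀ g g' : H, σ (g * g') = σ g * σ g' * half (commPairing hcomm g g') := by
    intro g g'
    obtain ⟨w, rfl⟩ := hbij.surjective g
    obtain ⟨w', rfl⟩ := hbij.surjective g'
    rw [factorMul_mul hcomm hZ, hσ, hσ, hσ,
      heisenbergCoord_mul hcomm half hZ hW₁comm hW₂comm hhalf hinj2]
  have hσZ : ∀ z : Z, σ z = z := fun z => by
    simpa [factorMul, heisenbergCoord, half_one hhalf hinj2,
      commPairing_eq_one_of_mul_comm hcomm (rfl : (1 : H) * 1 = 1 * 1)] using hσ (1, 1, z)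
  refine ⟨σ, fun w₁ w₂ z => hσ (w₁, w₂, z), bijective_mk_prod_of_map_mul_right σ fun g z => ?_,
    hcocycle⟩
  rw [hcocycle, hσZ, commPairing_coe_right hcomm hZ, half_one hhalf hinj2, mul_one]

/-- Let `Ĥ` be a group with central subgroup `Z`, abelian quotient
`V = Ĥ/Z`, commutators contained in `Z`, and a unique factorization
`Ĥ = W₁·W₂·Z` by abelian subgroups `W₁, W₂` meeting `Z` trivially.  Assume `Z`
is uniquely 2-divisible.  Then the map `j(w₁w₂z) = (π(w₁w₂), z·½κ(w₁,w₂))`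
(where `κ` is the commutator pairing) is a group isomorphism from `Ĥ` onto the
Heisenberg group `V^♯ = V × Z`: it is a bijection onto `(Ĥ/Z) × Z` whose second
component `σ` transforms by the Heisenberg cocycle `σ(gg') = σ(g)σ(g')·½κ(g,g')`. -/
theorem heisenberg_splitting
    (H : Type*) [Group H] (Z W₁ W₂ : Subgroup H)
    (hZ : Z ≤ Subgroup.center H)
    (hW₁comm : ∀ a ∈ W₁, ∀ b ∈ W₁, a * b = b * a)
    (hW₂comm : ∀ a ∈ W₂, ∀ b ∈ W₂, a * b = b * a)
    (hW₁Z : W₁ ⊓ Z = ⊥) (hW₂Z : W₂ ⊓ Z = ⊥)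
    (hfact : ∀ g : H, ∃! w : W₁ × W₂ × Z, g = (w.1 : H) * (w.2.1 : H) * (w.2.2 : H))
    (hcomm : ∀ x y : H, grpComm x y ∈ Z)
    (half : Z → Z) (hhalf : ∀ z : Z, half z * half z = z)
    (hinj2 : ∀ z w : Z, z * z = w * w → z = w) :
    ∃ σ : H → Z,
      (∀ (w₁ : W₁) (w₂ : W₂) (z : Z),
        σ ((w₁ : H) * (w₂ : H) * (z : H)) =
          z * half ⟨grpComm (w₁ : H) (w₂ : H), hcomm _ _⟩) ∧
      Function.Bijective (fun g : H => ((QuotientGroup.mk g : H ⧸ Z), σ g)) ∧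
      (∀ g g' : H, σ (g * g') = σ g * σ g' * half ⟨grpComm g g', hcomm g g'⟩) :=
  heisenberg_splitting_general H Z W₁ W₂ hZ hW₁comm hW₂comm hfact hcomm half hhalf hinj2
end

section
/- Let G be a linear algebraic group over an algebraically closed field of characteristic p > 0, generated by a torus T and finitely many one-dimensional unipotent subgroups each normalized by an element t whose conjugation action preserves T and each of these subgroups. If conjugation by t acts on T with finite order prime to p and acts on each one-dimensional unipotent subgroup (≅ G_a) through a scalar of finite multiplicative order, then the automorphism Ad(t) of G is semisimple of finite order prime to p. -/
/-!
Every generator has a `φ`-orbit of length dividing `N = n * ∏ i, orderOf (c i)`: the points of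
`T` by assumption, and `U i x` because `φ ^ m` sends it to `U i (c i ^ m * x)`. Hence `φ ^ N`
fixes a generating set, so `φ ^ N = 1`. No root of unity in characteristic `p` has order
divisible by `p`, because `ζ ^ (p * m) = 1` forces `ζ ^ m = 1` (Frobenius is injective); so `p ∤ N`.
-/

theorem Units.not_dvd_orderOf_of_expChar {R : Type*} [CommRing R] [IsReduced R] {p : ℕ}
    [ExpChar R p] (hp : p.Prime) {u : Rˣ} (hu : IsOfFinOrder u) : ¬ p ∣ orderOf u := by
  rintro ⟨m, hm⟩
  have hm0 : 0 < m := Nat.pos_of_mul_pos_left (hm ▸ hu.orderOf_pos)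
  have hum : u ^ m = 1 := by
    have h := pow_orderOf_eq_one u
    rw [hm, ← pow_one p] at h
    exact (mem_rootsOfUnity m u).mp ((mem_rootsOfUnity_prime_pow_mul_iff' R p 1 m).mp h)
  have hle := Nat.le_of_dvd hm0 (orderOf_dvd_of_pow_eq_one hum)
  rw [hm] at hle
  nlinarith [hp.two_le]

namespace MulAut

variable {G : Type*}

theorem pow_apply_eq_self_of_dvd [Monoid G] {φ : MulAut G} {g : G} {n N : ℕ}
    (hg : (φ ^ n) g = g) (hnN : n ∣ N) : (φ ^ N) g = g := by
  obtain ⟨m, rfl⟩ := hnN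
  have hmem : φ ^ n ∈ MulAction.stabilizer (MulAut G) g := hg
  rw [pow_mul]
  exact (MulAction.stabilizer (MulAut G) g).pow_mem hmem m

theorem pow_apply_of_apply_eq_mul [Mul G] {M : Type*} [Monoid M] {φ : MulAut G}
    {f : M → G} {c : M} (h : ∀ x, φ (f x) = f (c * x)) (m : ℕ) (x : M) :
    (φ ^ m) (f x) = f (c ^ m * x) := by
  induction m generalizing x with
  | zero => simp
  | succ m ih => rw [pow_succ, mul_apply, h, ih, pow_succ, mul_assoc]

theorem eq_one_of_closure_eq_top [Group G] {s : Set G} (hs : Subgroup.closure s = ⊤)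
    {φ : MulAut G} (h : ∀ g ∈ s, φ g = g) : φ = 1 :=
  MulEquiv.toMonoidHom_injective (MonoidHom.eq_of_eqOn_dense hs h)

end MulAut

theorem ad_semisimple_of_generators_general
    (p : ℕ) (hp : p.Prime)
    (k : Type*) [Field k] [CharP k p]
    (G : Type*) [Group G] (φ : MulAut G)
    (T : Subgroup G)
    (ι : Type*) [Finite ι] (U : ι → k → G)
    (hgen : Subgroup.closure ((T : Set G) ∪ ⋃ i, Set.range (U i)) = ⊤)
    (hT : ∃ n : ℕ, 0 < n ∧ ¬ p ∣ n ∧ ∀ t ∈ T, (φ ^ n) t = t)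
    (hU : ∀ i, ∃ c : kˣ, IsOfFinOrder c ∧ ∀ x : k, φ (U i x) = U i ((c : k) * x)) :
    IsOfFinOrder φ ∧ ¬ p ∣ orderOf φ := by
  have := Fact.mk hp
  have := Fintype.ofFinite ι
  obtain ⟨n, hn0, hnp, hTfix⟩ := hT
  choose c hc hφU using hU
  set N := n * ∏ i, orderOf (c i)
  have hN0 : 0 < N := Nat.mul_pos hn0 (Finset.prod_pos fun i _ ↦ (hc i).orderOf_pos)
  have hpN : ¬ p ∣ N := by
    rw [hp.prime.dvd_mul, Prime.dvd_finsetProd_iff hp.prime]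
    rintro (h | ⟨i, -, hi⟩)
    exacts [hnp h, Units.not_dvd_orderOf_of_expChar hp (hc i) hi]
  have hcN (i : ι) : (c i : k) ^ N = 1 := by
    have hdvd : orderOf (c i) ∣ N := (Finset.dvd_prod_of_mem _ (Finset.mem_univ i)).mul_left n
    rw [← Units.val_pow_eq_pow_val, orderOf_dvd_iff_pow_eq_one.mp hdvd, Units.val_one]
  have hφN : φ ^ N = 1 := by
    refine MulAut.eq_one_of_closure_eq_top hgen ?_
    rintro g (hg | hg)
    · exact MulAut.pow_apply_eq_self_of_dvd (hTfix g hg) (dvd_mul_right n _)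
    · obtain ⟨i, x, rfl⟩ := Set.mem_iUnion.mp hg
      rw [MulAut.pow_apply_of_apply_eq_mul (hφU i), hcN, one_mul]
  exact ⟨isOfFinOrder_iff_pow_eq_one.mpr ⟨N, hN0, hφN⟩,
    fun h ↦ hpN (h.trans (orderOf_dvd_of_pow_eq_one hφN))⟩

/-- Let `G` be a group (the points of a linear algebraic group over an
algebraically closed field `k` of characteristic `p > 0`) generated by a torus `T`
together with finitely many one-dimensional unipotent subgroups `U i ≅ 𝔾ₐ`
(parametrized additively by `k`), and let `φ = Ad(t)` be an automorphism of `G`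
preserving `T` and each `U i`.  If `φ` acts on `T` with finite order prime to `p`
and on each `U i` through a scalar `c i ∈ kˣ` of finite multiplicative order,
then `φ` is (semisimple of) finite order prime to `p`. -/
theorem ad_semisimple_of_generators
    (p : ℕ) (hp : p.Prime)
    (k : Type*) [Field k] [CharP k p]
    (G : Type*) [Group G] (φ : MulAut G)
    (T : Subgroup G)
    (ι : Type*) [Finite ι] (U : ι → k → G)
    (hUadd : ∀ i, ∀ x y : k, U i (x + y) = U i x * U i y)
    (hgen : Subgroup.closure ((T : Set G) ∪ ⋃ i, Set.range (U i)) = ⊤)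
    (hTstab : ∀ t ∈ T, φ t ∈ T)
    (hT : ∃ n : ℕ, 0 < n ∧ ¬ p ∣ n ∧ ∀ t ∈ T, (φ ^ n) t = t)
    (hU : ∀ i, ∃ c : kˣ, IsOfFinOrder c ∧ ∀ x : k, φ (U i x) = U i ((c : k) * x)) :
    IsOfFinOrder φ ∧ ¬ p ∣ orderOf φ :=
  ad_semisimple_of_generators_general p hp k G φ T ι U hgen hT hU
end
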